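/- Let α be a positive real number, let k and n be positive integers, and let H be an n-vertex graph containing a spanning forest with at most α vertices of degree at most one (degree taken in the spanning forest). Then H contains at least n/k − α pairwise vertex-disjoint paths, each on exactly k vertices. -/

import Mathlib

/-!
Delete a vertex `v` of degree at most one from the forest and induct: the vertices split into at
most `L` vertex-disjoint paths, `L` the number of vertices of degree at most one, provided every
such vertex is kept at an end of its path. Then `v` either becomes a path of its own (when this
lowers `L`) or is appended to the path ending at its neighbour (which has just become a vertex of
degree at most one). Cutting a path on `ℓ` vertices into `⌊ℓ/k⌋` consecutive blocks of `k`
vertices loses fewer than `k` of them, so there are at least `n/k - L` blocks.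
-/

namespace List

variable {α : Type*} {k q : ℕ} {l c : List α}

theorem exists_eq_cons_or_eq_reverse_cons {a : α}
    (h : a ∈ l.head? ∨ a ∈ l.getLast?) : ∃ t, l = a :: t ∨ l = (a :: t).reverse := by
  rcases h with h | h
  · obtain ⟨t, rfl⟩ := head?_eq_some_iff.1 h
    exact ⟨t, .inl rfl⟩
  · rw [← head?_reverse] at h
    obtain ⟨t, ht⟩ := head?_eq_some_iff.1 h
    exact ⟨t, .inr (by rw [← ht, reverse_reverse])⟩

def blocks (k : ℕ) : ℕ → List α → List (List α)
  | 0, _ => []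
  | q + 1, l => l.take k :: blocks k q (l.drop k)

@[simp]
theorem length_blocks (k q : ℕ) (l : List α) : (blocks k q l).length = q := by
  induction q generalizing l <;> simp [blocks, *]

theorem flatten_blocks_sublist (k q : ℕ) (l : List α) : (blocks k q l).flatten <+ l := by
  induction q generalizing l with
  | zero => exact nil_sublist l
  | succ q ih =>
    simpa [blocks] using (ih (l.drop k)).append_left (l.take k)

theorem infix_of_mem_blocks (hc : c ∈ blocks k q l) : c <:+: l := by
  induction q generalizing l with
  | zero => simp [blocks] at hc
  | succ q ih =>
    rcases mem_cons.1 hc with rfl | hc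
    exacts [(take_prefix k l).isInfix, (ih hc).trans (drop_suffix k l).isInfix]

theorem length_of_mem_blocks (hq : q * k ≤ l.length) (hc : c ∈ blocks k q l) : c.length = k := by
  induction q generalizing l with
  | zero => simp [blocks] at hc
  | succ q ih =>
    rw [Nat.succ_mul] at hq
    rcases mem_cons.1 hc with rfl | hc
    · simp only [length_take]
      omega
    · exact ih (by simp only [length_drop]; omega) hc

theorem flatten_flatMap_sublist {f : List α → List (List α)} (hf : ∀ l, (f l).flatten <+ l)
    (P : List (List α)) : (P.flatMap f).flatten <+ P.flatten := by
  induction P with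
  | nil => exact nil_sublist _
  | cons l P ih => simpa using (hf l).append ih

theorem length_flatten_le_blocks (hk : 0 < k) (P : List (List α)) :
    P.flatten.length ≤
      k * (P.flatMap fun l ↦ blocks k (l.length / k) l).length + k * P.length := by
  induction P with
  | nil => simp
  | cons l P ih =>
    have := Nat.lt_div_mul_add (a := l.length) hk
    simp only [flatten_cons, flatMap_cons, length_append, length_blocks, length_cons]
    nlinarith

end List

namespace SimpleGraph

open Finset

variable {V : Type*} {G : SimpleGraph V}

theorem IsAcyclic.exists_subsingleton_neighborSet [Finite V] [Nonempty V] (hG : G.IsAcyclic) :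
    ∃ v, (G.neighborSet v).Subsingleton := by
  obtain ⟨u, _, p, hp, hmax⟩ := Walk.exists_isPath_forall_isPath_length_le_length G
  -- a neighbour of the start of a longest path lies on it, so it is the second vertex
  have hsnd : ∀ w, G.Adj u w → w = p.snd := fun w hw ↦ by
    refine hG.eq_snd_of_adj_start hp hw (not_not.1 fun hwp ↦ ?_)
    have := hmax _ _ _ (hp.cons hwp (h := hw.symm))
    simp at this
  exact ⟨u, fun w hw w' hw' ↦ (hsnd w hw).trans (hsnd w' hw').symm⟩

section LowDegree

variable (G) [DecidableRel G.Adj]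

def lowDegree (s : Finset V) : Finset V := {v ∈ s | #{w ∈ s | G.Adj v w} ≤ 1}

variable {G} {s : Finset V} {u v w : V}

theorem IsAcyclic.nonempty_lowDegree (hG : G.IsAcyclic) (hs : s.Nonempty) :
    (G.lowDegree s).Nonempty := by
  have : Nonempty s := hs.to_subtype
  obtain ⟨⟨v, hv⟩, hsub⟩ := (hG.induce s).exists_subsingleton_neighborSet
  refine ⟨v, mem_filter.2 ⟨hv, card_le_one.2 fun a ha b hb ↦ ?_⟩⟩
  rw [mem_filter] at ha hb
  exact congrArg Subtype.val
    (@hsub ⟨a, ha.1⟩ (by simpa using ha.2) ⟨b, hb.1⟩ (by simpa using hb.2))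

theorem eq_of_adj_of_mem_lowDegree (hv : v ∈ G.lowDegree s) (hu : u ∈ s) (hw : w ∈ s)
    (hvu : G.Adj v u) (hvw : G.Adj v w) : u = w :=
  card_le_one.1 (mem_filter.1 hv).2 u (mem_filter.2 ⟨hu, hvu⟩) w (mem_filter.2 ⟨hw, hvw⟩)

theorem mem_lowDegree_erase [DecidableEq V] (hw : w ∈ G.lowDegree s) (hwv : w ≠ v) :
    w ∈ G.lowDegree (s.erase v) := by
  simp only [lowDegree, mem_filter, mem_erase] at hw ⊢
  exact ⟨⟨hwv, hw.1⟩, (card_le_card (filter_subset_filter _ (erase_subset v s))).trans hw.2⟩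

theorem mem_erase_lowDegree_of_mem_lowDegree_erase [DecidableEq V]
    (hw : w ∈ G.lowDegree (s.erase v))
    (hvw : ¬ G.Adj v w) : w ∈ (G.lowDegree s).erase v := by
  have hnbr : {x ∈ s.erase v | G.Adj w x} = {x ∈ s | G.Adj w x} := by
    rw [filter_erase, erase_eq_of_notMem]
    simp [adj_comm, hvw]
  simp only [lowDegree, mem_filter, mem_erase, hnbr] at hw ⊢
  exact ⟨hw.1.1, hw.1.2, hw.2⟩

theorem card_lowDegree_univ [Fintype V] :
    #(G.lowDegree univ) = {v | (G.neighborSet v).ncard ≤ 1}.ncard := by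
  rw [← Set.ncard_coe_finset]
  congr 1
  ext v
  simp [lowDegree, ← Set.ncard_coe_finset, neighborSet]

end LowDegree

section PathPartition

variable (G)

/-- `P` lists the vertex sequences of paths of `G`; the multiset equation says that these paths
are vertex-disjoint and cover exactly `s`. -/
structure IsPathPartition (s : Finset V) (P : List (List V)) : Prop where
  isChain : ∀ l ∈ P, l.IsChain G.Adj
  flatten_eq : (P.flatten : Multiset V) = s.val

variable {G} {s : Finset V} {P : List (List V)} {l t : List V} {u v : V}

theorem IsPathPartition.mem_of_mem (hP : G.IsPathPartition s P) (hl : l ∈ P) (hv : v ∈ l) :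
    v ∈ s := by
  rw [← Finset.mem_val, ← hP.flatten_eq, Multiset.mem_coe, List.mem_flatten]
  exact ⟨l, hl, hv⟩

theorem IsPathPartition.cons_singleton [DecidableEq V] (hP : G.IsPathPartition (s.erase v) P)
    (hv : v ∈ s) : G.IsPathPartition s ([v] :: P) where
  isChain l hl := by
    rcases List.mem_cons.1 hl with rfl | hl
    exacts [List.isChain_singleton v, hP.isChain l hl]
  flatten_eq := by
    rw [List.flatten_cons, ← Multiset.coe_add, hP.flatten_eq, Finset.erase_val]
    exact Multiset.cons_erase hv

theorem IsPathPartition.cons_cons [DecidableEq V] (hP : G.IsPathPartition (s.erase v) P)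
    (hv : v ∈ s) (hl : l ∈ P) (hlu : l = u :: t ∨ l = (u :: t).reverse) (hvu : G.Adj v u) :
    G.IsPathPartition s ((v :: u :: t) :: P.erase l) where
  isChain l' hl' := by
    rcases List.mem_cons.1 hl' with rfl | hl'
    · have hut : (u :: t).IsChain G.Adj := by
        rcases hlu with rfl | rfl
        · exact hP.isChain _ hl
        · exact (List.isChain_reverse.1 (hP.isChain _ hl)).imp fun _ _ h ↦ h.symm
      exact List.isChain_cons_cons.2 ⟨hvu, hut⟩
    · exact hP.isChain l' (List.mem_of_mem_erase hl')
  flatten_eq := by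
    have hl' : ((u :: t : List V) : Multiset V) = l := by
      rcases hlu with rfl | rfl
      exacts [rfl, (Multiset.coe_reverse _).symm]
    rw [← Multiset.cons_erase hv, ← Finset.erase_val, ← hP.flatten_eq,
      Multiset.coe_eq_coe.2 ((List.perm_cons_erase hl).flatten), List.flatten_cons,
      List.flatten_cons, ← Multiset.coe_add, ← Multiset.coe_add, ← hl']
    rfl

theorem IsPathPartition.nodup_flatten (hP : G.IsPathPartition s P) : P.flatten.Nodup :=
  Multiset.coe_nodup.1 (hP.flatten_eq ▸ s.nodup)

end PathPartition

section EndedPathPartition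

variable (G) [DecidableRel G.Adj]

/-- The invariant of the leaf-deletion induction: at most as many paths as vertices of degree at
most one in `G[s]`, each of these vertices being an end of its path. -/
structure IsEndedPathPartition (s : Finset V) (P : List (List V)) : Prop
    extends G.IsPathPartition s P where
  length_le : P.length ≤ #(G.lowDegree s)
  exists_end : ∀ w ∈ G.lowDegree s, ∃ l ∈ P, w ∈ l.head? ∨ w ∈ l.getLast?

variable {G} [DecidableEq V] {s : Finset V} {P : List (List V)} {u v : V}

theorem IsEndedPathPartition.cons_singleton (hP : G.IsEndedPathPartition (s.erase v) P)
    (hv : v ∈ G.lowDegree s) (hnbr : ∀ u ∈ G.lowDegree (s.erase v), ¬ G.Adj v u) :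
    G.IsEndedPathPartition s ([v] :: P) where
  toIsPathPartition := hP.toIsPathPartition.cons_singleton (mem_filter.1 hv).1
  length_le := by
    have hsub : G.lowDegree (s.erase v) ⊆ (G.lowDegree s).erase v := fun w hw ↦
      mem_erase_lowDegree_of_mem_lowDegree_erase hw (hnbr w hw)
    rw [List.length_cons, ← card_erase_add_one hv]
    exact Nat.succ_le_succ (hP.length_le.trans (card_le_card hsub))
  exists_end w hw := by
    by_cases hwv : w = v
    · exact ⟨[v], List.mem_cons_self, .inl (by simp [hwv])⟩
    · obtain ⟨l, hl, hend⟩ := hP.exists_end w (mem_lowDegree_erase hw hwv)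
      exact ⟨l, List.mem_cons_of_mem _ hl, hend⟩

theorem IsEndedPathPartition.exists_of_adj (hP : G.IsEndedPathPartition (s.erase v) P)
    (hv : v ∈ G.lowDegree s) (hu : u ∈ G.lowDegree (s.erase v)) (hvu : G.Adj v u) :
    ∃ P', G.IsEndedPathPartition s P' := by
  obtain ⟨l, hl, hul⟩ := hP.exists_end u hu
  obtain ⟨t, hlu⟩ := List.exists_eq_cons_or_eq_reverse_cons hul
  have hvs : v ∈ s := (mem_filter.1 hv).1
  have hus : u ∈ s := mem_of_mem_erase (mem_filter.1 hu).1
  have hP' := hP.toIsPathPartition.cons_cons hvs hl hlu hvu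
  refine ⟨(v :: u :: t) :: P.erase l, hP', ?_, fun w hw ↦ ?_⟩
  · have hsub : G.lowDegree (s.erase v) ⊆ insert u ((G.lowDegree s).erase v) := fun w hw ↦ by
      by_cases hvw : G.Adj v w
      · rw [eq_of_adj_of_mem_lowDegree hv hus (mem_of_mem_erase (mem_filter.1 hw).1) hvu hvw]
        exact mem_insert_self _ _
      · exact mem_insert_of_mem (mem_erase_lowDegree_of_mem_lowDegree_erase hw hvw)
    rw [List.length_cons, List.length_erase_add_one hl, ← card_erase_add_one hv]
    exact hP.length_le.trans ((card_le_card hsub).trans (card_insert_le _ _))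
  by_cases hwv : w = v
  · exact ⟨_, List.mem_cons_self, .inl (by simp [hwv])⟩
  obtain ⟨l', hl', hend⟩ := hP.exists_end w (mem_lowDegree_erase hw hwv)
  by_cases hll : l' = l
  swap
  · exact ⟨l', List.mem_cons_of_mem _ ((List.mem_erase_of_ne hll).2 hl'), hend⟩
  subst hll
  refine ⟨_, List.mem_cons_self, .inr ?_⟩
  by_cases hwu : w = u
  · -- `u` then has no neighbour besides `v` in `s`, so it is alone on its path
    subst hwu
    obtain _ | ⟨y, t⟩ := t
    · simp
    have hwy : G.Adj w y := (List.isChain_cons_cons.1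
      (List.isChain_cons_cons.1 (hP'.isChain _ List.mem_cons_self)).2).1
    have hys : y ∈ s.erase v := hP.mem_of_mem hl' (by rcases hlu with rfl | rfl <;> simp)
    exact absurd (eq_of_adj_of_mem_lowDegree hw hvs (mem_of_mem_erase hys) hvu.symm hwy)
      (ne_of_mem_erase hys).symm
  · have hend' : w ∈ (u :: t).head? ∨ w ∈ (u :: t).getLast? := by
      rcases hlu with rfl | rfl
      exacts [hend, by rwa [List.head?_reverse, List.getLast?_reverse, or_comm] at hend]
    simpa [List.getLast?_cons_cons, Ne.symm hwu] using hend'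

theorem IsAcyclic.exists_isEndedPathPartition (hG : G.IsAcyclic) (s : Finset V) :
    ∃ P, G.IsEndedPathPartition s P := by
  induction s using Finset.strongInduction with
  | H s ih =>
  rcases s.eq_empty_or_nonempty with rfl | hs
  · exact ⟨[], ⟨⟨by simp, by simp⟩, by simp, by simp [lowDegree]⟩⟩
  obtain ⟨v, hv⟩ := hG.nonempty_lowDegree hs
  obtain ⟨P, hP⟩ := ih _ (erase_ssubset (mem_filter.1 hv).1)
  by_cases hadj : ∃ u ∈ G.lowDegree (s.erase v), G.Adj v u
  · obtain ⟨u, hu, hvu⟩ := hadj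
    exact hP.exists_of_adj hv hu hvu
  · push Not at hadj
    exact ⟨_, hP.cons_singleton hv hadj⟩

end EndedPathPartition

section DisjointPaths

variable (G) {m k : ℕ}

structure IsDisjointPaths (Q : Fin m → Fin k → V) : Prop where
  injective : ∀ i, Function.Injective (Q i)
  adj : ∀ (i : Fin m) (j : ℕ) (hj : j + 1 < k),
    G.Adj (Q i ⟨j, Nat.lt_of_succ_lt hj⟩) (Q i ⟨j + 1, hj⟩)
  disjoint : ∀ i₁ i₂, i₁ ≠ i₂ → ∀ j₁ j₂, Q i₁ j₁ ≠ Q i₂ j₂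

variable {G}

theorem exists_isDisjointPaths_of_flatten_nodup {C : List (List V)}
    (hlen : ∀ c ∈ C, c.length = k) (hchain : ∀ c ∈ C, c.IsChain G.Adj) (hnd : C.flatten.Nodup) :
    ∃ Q : Fin C.length → Fin k → V, G.IsDisjointPaths Q := by
  have hlen' (i : Fin C.length) : C[i].length = k := hlen _ (List.getElem_mem _)
  obtain ⟨hnd', hdisj⟩ := List.nodup_flatten.1 hnd
  refine ⟨fun i j ↦ C[i][(j : ℕ)]'(by rw [hlen' i]; exact j.2), ⟨fun i j₁ j₂ h ↦ ?_,
    fun i j hj ↦ ?_, fun i₁ i₂ hi j₁ j₂ h ↦ ?_⟩⟩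
  · exact Fin.ext ((hnd' _ (List.getElem_mem _)).getElem_inj_iff.1 h)
  · exact List.isChain_iff_getElem.1 (hchain _ (List.getElem_mem _)) j _
  · wlog hlt : i₁ < i₂ generalizing i₁ i₂ j₁ j₂
    · exact this i₂ i₁ (Ne.symm hi) j₂ j₁ h.symm (lt_of_le_of_ne (not_lt.1 hlt) (Ne.symm hi))
    exact List.pairwise_iff_getElem.1 hdisj i₁ i₂ i₁.2 i₂.2 hlt (List.getElem_mem _)
      (h.symm ▸ List.getElem_mem _)

theorem IsPathPartition.exists_isDisjointPaths {s : Finset V} {P : List (List V)}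
    (hP : G.IsPathPartition s P) (hk : 0 < k) :
    ∃ (m : ℕ) (Q : Fin m → Fin k → V), #s ≤ k * m + k * P.length ∧ G.IsDisjointPaths Q := by
  set C := P.flatMap fun l ↦ l.blocks k (l.length / k)
  have hC : ∀ c ∈ C, c.length = k ∧ c.IsChain G.Adj := fun c hc ↦ by
    obtain ⟨l, hl, hc⟩ := List.mem_flatMap.1 hc
    exact ⟨List.length_of_mem_blocks (Nat.div_mul_le_self _ _) hc,
      (hP.isChain l hl).infix (List.infix_of_mem_blocks hc)⟩
  have hnd : C.flatten.Nodup := (List.flatten_flatMap_sublist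
    (fun l ↦ List.flatten_blocks_sublist k _ l) P).nodup hP.nodup_flatten
  obtain ⟨Q, hQ⟩ := exists_isDisjointPaths_of_flatten_nodup (fun c hc ↦ (hC c hc).1)
    (fun c hc ↦ (hC c hc).2) hnd
  refine ⟨C.length, Q, ?_, hQ⟩
  have hs : #s = P.flatten.length := by
    rw [card_def, ← hP.flatten_eq, Multiset.coe_card]
  exact hs ▸ List.length_flatten_le_blocks hk P

end DisjointPaths

end SimpleGraph

open SimpleGraph

theorem many_disjoint_paths_general {V : Type} [Fintype V]
    (a : ℝ) (k n : ℕ) (hk : 0 < k)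
    (hcard : Fintype.card V = n)
    (H F : SimpleGraph V) (hFH : F ≤ H) (hF : F.IsAcyclic)
    (hfew : ({v : V | (F.neighborSet v).ncard ≤ 1}.ncard : ℝ) ≤ a) :
    ∃ (m : ℕ) (P : Fin m → Fin k → V),
      (n : ℝ) / (k : ℝ) - a ≤ (m : ℝ) ∧
      (∀ i, Function.Injective (P i)) ∧
      (∀ (i : Fin m) (j : ℕ) (hj : j + 1 < k),
        H.Adj (P i ⟨j, Nat.lt_of_succ_lt hj⟩) (P i ⟨j + 1, hj⟩)) ∧
      (∀ i₁ i₂, i₁ ≠ i₂ → ∀ j₁ j₂, P i₁ j₁ ≠ P i₂ j₂) := by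
  classical
  obtain ⟨P, hP⟩ := hF.exists_isEndedPathPartition Finset.univ
  obtain ⟨m, Q, hm, hQ⟩ := hP.exists_isDisjointPaths hk
  refine ⟨m, Q, ?_, hQ.injective, fun i j hj ↦ hFH (hQ.adj i j hj), hQ.disjoint⟩
  have hPa : (P.length : ℝ) ≤ a := by
    rw [← card_lowDegree_univ] at hfew
    exact (Nat.cast_le.2 hP.length_le).trans hfew
  rw [Finset.card_univ, hcard] at hm
  have hm' : (n : ℝ) ≤ k * m + k * P.length := by exact_mod_cast hm
  have hk' : (0 : ℝ) < k := Nat.cast_pos.2 hk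
  rw [sub_le_iff_le_add, div_le_iff₀ hk']
  nlinarith

/-- Many disjoint `k`-vertex paths from a spanning forest with few
leaves and isolated vertices.  Let `a > 0` be a real number, let `k, n` be positive
integers, and let `H` be an `n`-vertex graph containing a spanning forest `F` with at
most `a` vertices of degree at most one (degree taken in `F`).  Then `H` contains at
least `n/k − a` pairwise vertex-disjoint paths, each on exactly `k` vertices. -/
theorem many_disjoint_paths {V : Type} [Fintype V]
    (a : ℝ) (ha : 0 < a) (k n : ℕ) (hk : 0 < k) (hn : 0 < n)
    (hcard : Fintype.card V = n)
    (H F : SimpleGraph V) (hFH : F ≤ H) (hF : F.IsAcyclic)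
    (hfew : ({v : V | (F.neighborSet v).ncard ≤ 1}.ncard : ℝ) ≤ a) :
    ∃ (m : ℕ) (P : Fin m → Fin k → V),
      (n : ℝ) / (k : ℝ) - a ≤ (m : ℝ) ∧
      (∀ i, Function.Injective (P i)) ∧
      (∀ (i : Fin m) (j : ℕ) (hj : j + 1 < k),
        H.Adj (P i ⟨j, Nat.lt_of_succ_lt hj⟩) (P i ⟨j + 1, hj⟩)) ∧
      (∀ i₁ i₂, i₁ ≠ i₂ → ∀ j₁ j₂, P i₁ j₁ ≠ P i₂ j₂) :=
  many_disjoint_paths_general a k n hk hcard H F hFH hF hfew
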